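/- arXiv:2009.08000 — 2 statements merged into one kernel-verified Lean document; each statement's English description precedes it below -/
import Mathlib

section
/- Fix d ≥ 1, 1 ≤ k ≤ d, α ∈ (0,1/2), and let 𝒫_{d,k,α} = {P_{d,t,b,α}} where P_{d,t,b,α}(x) = (1 + 2αb·∏_{i∈t} x_i)·2^{−d} for nonempty t ⊆ [d] with |t| ≤ k and b ∈ {±1}. Let U be the uniform distribution on {±1}^d. Then for every function f : {±1}^d → [−1,1], the average over all (t,b) in the family of (E_{x∼P_{d,t,b,α}}[f(x)] − E_{x∼U}[f(x)])² is at most 4α² / C(d,≤k), where C(d,≤k) = ∑_{j=1}^{k} C(d,j). -/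
open Finset

noncomputable def sgn (b : Bool) : ℝ := if b then 1 else -1

noncomputable def Pd (d : ℕ) (t : Finset (Fin d)) (b : Bool) (α : ℝ)
    (x : Fin d → Bool) : ℝ :=
  (1 + 2 * α * sgn b * ∏ i ∈ t, sgn (x i)) / 2 ^ d

/-!
The deviation `E_{P_{d,t,b,α}} f − E_U f` equals `2αb f̂(t)`, so the average of its squares over
the family is `4α² / C(d,≤k)` times `∑ f̂(t)²` over the `t` in the family, and by Parseval this sum
is at most `E_U[f²] ≤ 1`.
-/

lemma sgn_mul_sgn_add_one (a b : Bool) : sgn a * sgn b + 1 = if a = b then 2 else 0 := by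
  cases a <;> cases b <;> norm_num [sgn]

section Fourier

variable {ι : Type*} [Fintype ι]

noncomputable def walsh (t : Finset ι) (x : ι → Bool) : ℝ := ∏ i ∈ t, sgn (x i)

lemma sum_walsh_mul_walsh (x y : ι → Bool) :
    ∑ t, walsh t x * walsh t y = if x = y then 2 ^ Fintype.card ι else 0 := by
  have hprod : ∑ t, walsh t x * walsh t y = ∏ i, (sgn (x i) * sgn (y i) + 1) := by
    rw [prod_add_one, powerset_univ]
    simp only [walsh, prod_mul_distrib]
  rw [hprod]
  simp_rw [sgn_mul_sgn_add_one]
  split_ifs with hxy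
  · simp [hxy]
  · obtain ⟨i, hi⟩ := Function.ne_iff.mp hxy
    exact prod_eq_zero (mem_univ i) (if_neg hi)

variable [DecidableEq ι]

/-- The Fourier coefficient `f̂(t) = E_{x∼U}[f(x) ∏_{i∈t} x_i]`, reading `x_i` as `sgn (x i)`. -/
noncomputable def walshCoeff (f : (ι → Bool) → ℝ) (t : Finset ι) : ℝ :=
  (∑ x, walsh t x * f x) / 2 ^ Fintype.card ι

theorem sum_walshCoeff_sq (f : (ι → Bool) → ℝ) :
    ∑ t, walshCoeff f t ^ 2 = (∑ x, f x ^ 2) / 2 ^ Fintype.card ι := by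
  have hsum : ∑ t, (∑ x, walsh t x * f x) ^ 2 = 2 ^ Fintype.card ι * ∑ x, f x ^ 2 :=
    calc ∑ t, (∑ x, walsh t x * f x) ^ 2
        = ∑ x, ∑ y, f x * f y * ∑ t, walsh t x * walsh t y := by
          simp_rw [sq, sum_mul_sum, mul_sum]
          rw [sum_comm]
          refine sum_congr rfl fun x _ => ?_
          rw [sum_comm]
          exact sum_congr rfl fun y _ => sum_congr rfl fun t _ => by ring
      _ = 2 ^ Fintype.card ι * ∑ x, f x ^ 2 := by
          simp_rw [sum_walsh_mul_walsh, mul_ite, mul_zero, sum_ite_eq, mem_univ, if_true,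
            mul_sum]
          exact sum_congr rfl fun x _ => by ring
  simp only [walshCoeff, div_pow, ← sum_div, hsum]
  field_simp

theorem sum_walshCoeff_sq_le_one (f : (ι → Bool) → ℝ) (hf : ∀ x, |f x| ≤ 1) :
    ∑ t, walshCoeff f t ^ 2 ≤ 1 := by
  rw [sum_walshCoeff_sq, div_le_one (by positivity)]
  calc ∑ x, f x ^ 2 ≤ ∑ _x : ι → Bool, (1 : ℝ) :=
        sum_le_sum fun x _ => (sq_le_one_iff_abs_le_one (f x)).mpr (hf x)
    _ = 2 ^ Fintype.card ι := by simp

end Fourier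

lemma card_filter_nonempty_card_le {α : Type*} [Fintype α] [DecidableEq α] (k : ℕ) :
    #{t : Finset α | t.Nonempty ∧ #t ≤ k} = ∑ j ∈ Icc 1 k, (Fintype.card α).choose j := by
  have hfilter : ({t : Finset α | t.Nonempty ∧ #t ≤ k} : Finset (Finset α))
      = (Icc 1 k).biUnion fun j => powersetCard j univ := by
    ext t
    simp [Nat.one_le_iff_ne_zero, nonempty_iff_ne_empty, and_comm]
  rw [hfilter, card_biUnion]
  · simp [card_powersetCard]
  · intro i _ j _ hij
    exact disjoint_left.mpr fun t hi hj =>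
      hij ((mem_powersetCard_univ.mp hi).symm.trans (mem_powersetCard_univ.mp hj))

lemma sum_Pd_mul_sub_uniform (d : ℕ) (t : Finset (Fin d)) (b : Bool) (α : ℝ)
    (f : (Fin d → Bool) → ℝ) :
    ∑ x, Pd d t b α x * f x - ∑ x, (1 / 2 ^ d : ℝ) * f x
      = 2 * α * sgn b * walshCoeff f t := by
  rw [walshCoeff, Fintype.card_fin, mul_div_assoc', mul_sum, sum_div, ← sum_sub_distrib]
  refine sum_congr rfl fun x _ => ?_
  rw [Pd, walsh]
  ring

lemma sum_bool_sq_sum_Pd_mul_sub_uniform (d : ℕ) (t : Finset (Fin d)) (α : ℝ)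
    (f : (Fin d → Bool) → ℝ) :
    ∑ b : Bool, (∑ x, Pd d t b α x * f x - ∑ x, (1 / 2 ^ d : ℝ) * f x) ^ 2
      = 2 * (4 * α ^ 2 * walshCoeff f t ^ 2) := by
  simp only [sum_Pd_mul_sub_uniform, Fintype.sum_bool, sgn, if_true, Bool.false_eq_true,
    if_false]
  ring

theorem stmt_4_general (d k : ℕ)
    (α : ℝ)
    (f : (Fin d → Bool) → ℝ) (hf : ∀ x, |f x| ≤ 1) :
    (1 / (2 * ((Finset.univ.filter
        (fun t : Finset (Fin d) => t.Nonempty ∧ t.card ≤ k)).card : ℝ))) *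
      ∑ t ∈ Finset.univ.filter
          (fun t : Finset (Fin d) => t.Nonempty ∧ t.card ≤ k),
        ∑ b : Bool,
          (∑ x, Pd d t b α x * f x - ∑ x, (1 / 2 ^ d : ℝ) * f x) ^ 2 ≤
      4 * α ^ 2 / (∑ j ∈ Finset.Icc 1 k, (d.choose j : ℝ)) := by
  set S := Finset.univ.filter (fun t : Finset (Fin d) => t.Nonempty ∧ t.card ≤ k)
  have hcard : (#S : ℝ) = ∑ j ∈ Icc 1 k, (d.choose j : ℝ) := by
    rw [card_filter_nonempty_card_le, Fintype.card_fin, Nat.cast_sum]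
  have hfourier : ∑ t ∈ S, walshCoeff f t ^ 2 ≤ 1 :=
    (sum_le_univ_sum_of_nonneg fun t => sq_nonneg _).trans (sum_walshCoeff_sq_le_one f hf)
  simp_rw [sum_bool_sq_sum_Pd_mul_sub_uniform, ← mul_sum, ← hcard]
  calc 1 / (2 * (#S : ℝ)) * (2 * (4 * α ^ 2 * ∑ t ∈ S, walshCoeff f t ^ 2))
      = 4 * α ^ 2 / #S * ∑ t ∈ S, walshCoeff f t ^ 2 := by
        ring
    _ ≤ 4 * α ^ 2 / #S * 1 := by gcongr
    _ = 4 * α ^ 2 / #S := mul_one _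

/-- The `(∞→2)`-norm bound for the family `𝒫_{d,k,α}`: for every `f : {±1}^d → [-1,1]`,
the average over the family of `(E_{P_{d,t,b,α}} f − E_U f)²` is at most
`4α² / C(d,≤k)` where `C(d,≤k) = ∑_{j=1}^k C(d,j)`. -/
theorem stmt_4 (d k : ℕ) (hd : 1 ≤ d) (hk : 1 ≤ k) (hkd : k ≤ d)
    (α : ℝ) (hα : 0 < α) (hα2 : α < 1 / 2)
    (f : (Fin d → Bool) → ℝ) (hf : ∀ x, |f x| ≤ 1) :
    (1 / (2 * ((Finset.univ.filter
        (fun t : Finset (Fin d) => t.Nonempty ∧ t.card ≤ k)).card : ℝ))) *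
      ∑ t ∈ Finset.univ.filter
          (fun t : Finset (Fin d) => t.Nonempty ∧ t.card ≤ k),
        ∑ b : Bool,
          (∑ x, Pd d t b α x * f x - ∑ x, (1 / 2 ^ d : ℝ) * f x) ^ 2 ≤
      4 * α ^ 2 / (∑ j ∈ Finset.Icc 1 k, (d.choose j : ℝ)) :=
  stmt_4_general d k α f hf
end

section
/- Let V be uniform over a finite set 𝒱 and let {P_v}_{v∈𝒱} be a family of distributions on a finite set X. Suppose that for every (2ε,0)-differentially private single-input algorithm M' we have I(M'(P_V); V) ≤ C·ε²·‖{P_v}‖²_{∞→2} for an absolute constant C > 0. Then for every (ε,δ)-differentially private single-input algorithm M, I(M(P_V); V) ≤ C·ε²·‖{P_v}‖²_{∞→2} + O(δ·log|𝒱| + δ·log(1/δ)). -/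
open Finset

def IsDist {α : Type*} [Fintype α] (p : α → ℝ) : Prop :=
  (∀ x, 0 ≤ p x) ∧ ∑ x, p x = 1

def IsDP {X R : Type*} [Fintype X] [Fintype R] (M : X → R → ℝ) (ε δ : ℝ) : Prop :=
  ∀ x x' : X, ∀ C : Finset R, ∑ r ∈ C, M x r ≤ Real.exp ε * ∑ r ∈ C, M x' r + δ

/-- Mutual information (in nats) of a joint distribution on a finite product. -/
noncomputable def mutualInfo {α β : Type*} [Fintype α] [Fintype β]
    (j : α × β → ℝ) : ℝ :=
  ∑ p : α × β,
    if j p = 0 then 0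
    else j p * Real.log (j p / ((∑ b, j (p.1, b)) * (∑ a, j (a, p.2))))

/-- The joint distribution of `(M(P_V), V)` where `V` is uniform on `𝒱`. -/
noncomputable def jointMV {V X R : Type*} [Fintype V] [Fintype X] [Fintype R]
    (P : V → X → ℝ) (M : X → R → ℝ) : R × V → ℝ :=
  fun p => (1 / (Fintype.card V : ℝ)) * ∑ x, P p.2 x * M x p.1

/-- The squared `(∞→2)`-norm of a family of distributions `{P_v}` relative to the
uniform mixture `U = E_v[P_v]`. -/
noncomputable def infTwoNormSq {V X : Type*} [Fintype V] [Fintype X]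
    (P : V → X → ℝ) : ℝ :=
  ⨆ f : {f : X → ℝ // ∀ x, |f x| ≤ 1},
    (1 / (Fintype.card V : ℝ)) *
      ∑ v, (∑ x, P v x * f.1 x -
        ∑ x, ((1 / (Fintype.card V : ℝ)) * ∑ v', P v' x) * f.1 x) ^ 2

open Finset Real

/-!
Clamping every row `M x` into the band `[e^{-ε} M x₀, e^{ε} M x₀]` around a fixed row and
renormalising inside the band yields a `(2ε, 0)`-private `M'`; `(ε, δ)`-privacy bounds the mass
moved by `O(δ)`. As `V` is uniform, `I(M(P_V); V) = log |𝒱| - H(V | M(P_V))`, so it remains to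
show that `H(V | ·)` is continuous: writing the two joint laws as a common part plus excesses of
mass `d = O(δ)`, superadditivity of `H(V | ·)` and its near-subadditivity (up to the binary
entropy `h(d)`) give `H(V | M') ≤ H(V | M) + d log |𝒱| + h(d)`.
-/

-- For `y > 0` this is the perspective `y * negMulLog (x / y)`; this form avoids dividing by `y`.
noncomputable def perspNegMulLog (x y : ℝ) : ℝ := negMulLog x + x * log y

@[simp] lemma perspNegMulLog_zero_left (y : ℝ) : perspNegMulLog 0 y = 0 := by
  simp [perspNegMulLog]

lemma perspNegMulLog_eq_mul_negMulLog_div (x : ℝ) {y : ℝ} (hy : 0 < y) :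
    perspNegMulLog x y = y * negMulLog (x / y) := by
  have hmul := negMulLog_mul (x / y) y
  rw [div_mul_cancel₀ x hy.ne'] at hmul
  have hlog : x / y * negMulLog y = -(x * log y) := by rw [negMulLog]; field_simp
  rw [perspNegMulLog, hmul]
  linarith

lemma perspNegMulLog_nonneg {x y : ℝ} (hx : 0 ≤ x) (hxy : x ≤ y) :
    0 ≤ perspNegMulLog x y := by
  rcases hx.eq_or_lt with rfl | hx
  · simp
  rw [perspNegMulLog, negMulLog]
  nlinarith [log_le_log hx hxy]

lemma perspNegMulLog_le {x y c : ℝ} (hx : 0 ≤ x) (hxy : x ≤ y) (hc : 0 < c) :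
    perspNegMulLog x y ≤ x * log c + y / c - x := by
  rcases hx.eq_or_lt with rfl | hx
  · simpa using div_nonneg hxy hc.le
  have hy : 0 < y := hx.trans_le hxy
  have key := log_le_sub_one_of_pos (show 0 < y / (c * x) by positivity)
  rw [log_div hy.ne' (by positivity), log_mul hc.ne' hx.ne'] at key
  have : x * (y / (c * x) - 1) = y / c - x := by field_simp
  rw [perspNegMulLog, negMulLog]
  nlinarith [mul_le_mul_of_nonneg_left key hx.le]

lemma perspNegMulLog_add_perspNegMulLog_le {a b c d : ℝ} (ha : 0 ≤ a) (hac : a ≤ c) (hb : 0 ≤ b)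
    (hbd : b ≤ d) :
    perspNegMulLog a c + perspNegMulLog b d ≤ perspNegMulLog (a + b) (c + d) := by
  rcases (ha.trans hac).eq_or_lt with rfl | hc
  · simp [le_antisymm hac ha]
  rcases (hb.trans hbd).eq_or_lt with rfl | hd
  · simp [le_antisymm hbd hb]
  have hcd : 0 < c + d := by positivity
  have key := concaveOn_negMulLog.2 (Set.mem_Ici.2 (div_nonneg ha hc.le))
    (Set.mem_Ici.2 (div_nonneg hb hd.le)) (div_nonneg hc.le hcd.le) (div_nonneg hd.le hcd.le)
    (by field_simp)
  simp only [smul_eq_mul] at key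
  rw [perspNegMulLog_eq_mul_negMulLog_div _ hc, perspNegMulLog_eq_mul_negMulLog_div _ hd,
    perspNegMulLog_eq_mul_negMulLog_div _ hcd]
  have e : c / (c + d) * (a / c) + d / (c + d) * (b / d) = (a + b) / (c + d) := by
    field_simp
  rw [e] at key
  have := mul_le_mul_of_nonneg_left key hcd.le
  have e2 : (c + d) * (c / (c + d) * negMulLog (a / c) + d / (c + d) * negMulLog (b / d))
      = c * negMulLog (a / c) + d * negMulLog (b / d) := by field_simp
  linarith

lemma negMulLog_add_le {a b : ℝ} (ha : 0 ≤ a) (hb : 0 ≤ b) :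
    negMulLog (a + b) ≤ negMulLog a + negMulLog b := by
  have h := perspNegMulLog_nonneg ha (le_add_of_nonneg_right hb)
  have h' := perspNegMulLog_nonneg hb (le_add_of_nonneg_left ha)
  simp only [perspNegMulLog, negMulLog] at h h' ⊢
  linarith

section Entropy

variable {ι : Type*} [Fintype ι]

noncomputable def entropy (p : ι → ℝ) : ℝ := ∑ i, negMulLog (p i)

/-- `(∑ q) • entropy (q / ∑ q)`, the entropy of `q` made positively homogeneous. -/
noncomputable def scaledEntropy (q : ι → ℝ) : ℝ := ∑ i, perspNegMulLog (q i) (∑ j, q j)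

lemma scaledEntropy_eq_entropy_sub (q : ι → ℝ) :
    scaledEntropy q = entropy q - negMulLog (∑ i, q i) := by
  simp only [scaledEntropy, entropy, perspNegMulLog, sum_add_distrib, ← sum_mul, negMulLog]
  ring

lemma entropy_add_le {p q : ι → ℝ} (hp : 0 ≤ p) (hq : 0 ≤ q) :
    entropy (p + q) ≤ entropy p + entropy q := by
  rw [entropy, entropy, entropy, ← sum_add_distrib]
  exact sum_le_sum fun i _ => negMulLog_add_le (hp i) (hq i)

lemma scaledEntropy_nonneg {q : ι → ℝ} (hq : 0 ≤ q) : 0 ≤ scaledEntropy q :=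
  sum_nonneg fun i _ => perspNegMulLog_nonneg (hq i) (single_le_sum (fun j _ => hq j) (mem_univ i))

lemma scaledEntropy_le [Nonempty ι] {q : ι → ℝ} (hq : 0 ≤ q) :
    scaledEntropy q ≤ (∑ i, q i) * log (Fintype.card ι) := by
  have hn : (0 : ℝ) < Fintype.card ι := by exact_mod_cast Fintype.card_pos
  calc scaledEntropy q
      ≤ ∑ i, (q i * log (Fintype.card ι) + (∑ j, q j) / Fintype.card ι - q i) :=
        sum_le_sum fun i _ =>
          perspNegMulLog_le (hq i) (single_le_sum (fun j _ => hq j) (mem_univ i)) hn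
    _ = (∑ i, q i) * log (Fintype.card ι) := by
        rw [sum_sub_distrib, sum_add_distrib, ← sum_mul, sum_const, card_univ, nsmul_eq_mul]
        field_simp
        ring

lemma scaledEntropy_add_scaledEntropy_le {p q : ι → ℝ} (hp : 0 ≤ p) (hq : 0 ≤ q) :
    scaledEntropy p + scaledEntropy q ≤ scaledEntropy (p + q) := by
  rw [scaledEntropy, scaledEntropy, scaledEntropy, ← sum_add_distrib]
  refine sum_le_sum fun i _ => ?_
  simp only [Pi.add_apply, sum_add_distrib]
  exact perspNegMulLog_add_perspNegMulLog_le (hp i) (single_le_sum (fun j _ => hp j) (mem_univ i))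
    (hq i) (single_le_sum (fun j _ => hq j) (mem_univ i))

end Entropy

section CondEntropy

variable {R V : Type*} [Fintype R] [Fintype V]

/-- The conditional entropy `H(V | R)` of a joint law `j` of `(R, V)`. -/
noncomputable def condEntropy (j : R × V → ℝ) : ℝ :=
  entropy j - entropy (fun r => ∑ v, j (r, v))

lemma condEntropy_eq_sum_scaledEntropy (j : R × V → ℝ) :
    condEntropy j = ∑ r, scaledEntropy (fun v => j (r, v)) := by
  simp only [condEntropy, entropy, scaledEntropy_eq_entropy_sub, Fintype.sum_prod_type,
    sum_sub_distrib]

lemma condEntropy_nonneg {j : R × V → ℝ} (hj : 0 ≤ j) : 0 ≤ condEntropy j := by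
  rw [condEntropy_eq_sum_scaledEntropy]
  exact sum_nonneg fun r _ => scaledEntropy_nonneg fun v => hj (r, v)

lemma condEntropy_le [Nonempty V] {j : R × V → ℝ} (hj : 0 ≤ j) :
    condEntropy j ≤ (∑ p, j p) * log (Fintype.card V) := by
  rw [condEntropy_eq_sum_scaledEntropy, Fintype.sum_prod_type, sum_mul]
  exact sum_le_sum fun r _ => scaledEntropy_le fun v => hj (r, v)

lemma condEntropy_add_condEntropy_le {μ ν : R × V → ℝ} (hμ : 0 ≤ μ) (hν : 0 ≤ ν) :
    condEntropy μ + condEntropy ν ≤ condEntropy (μ + ν) := by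
  simp only [condEntropy_eq_sum_scaledEntropy, ← sum_add_distrib]
  exact sum_le_sum fun r _ =>
    scaledEntropy_add_scaledEntropy_le (fun v => hμ (r, v)) (fun v => hν (r, v))

lemma condEntropy_add_le {μ ν : R × V → ℝ} (hμ : 0 ≤ μ) (hν : 0 ≤ ν)
    (hsum : ∑ p, μ p + ∑ p, ν p = 1) :
    condEntropy (μ + ν) ≤ condEntropy μ + condEntropy ν + binEntropy (∑ p, ν p) := by
  set μR : R → ℝ := fun r => ∑ v, μ (r, v)
  set νR : R → ℝ := fun r => ∑ v, ν (r, v)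
  have hμR : ∑ r, μR r = ∑ p, μ p := (Fintype.sum_prod_type _).symm
  have hνR : ∑ r, νR r = ∑ p, ν p := (Fintype.sum_prod_type _).symm
  have hjoint := entropy_add_le hμ hν
  have hmarg := scaledEntropy_add_scaledEntropy_le (p := μR) (q := νR)
    (fun r => sum_nonneg fun v _ => hμ (r, v)) (fun r => sum_nonneg fun v _ => hν (r, v))
  have hmarg_add : (fun r => ∑ v, (μ + ν) (r, v)) = μR + νR := by
    funext r
    simp only [Pi.add_apply, sum_add_distrib, μR, νR]
  simp only [scaledEntropy_eq_entropy_sub, Pi.add_apply, sum_add_distrib, hμR, hνR, hsum,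
    negMulLog_one] at hmarg
  rw [binEntropy_eq_negMulLog_add_negMulLog_one_sub, ← hsum, add_sub_cancel_right]
  simp only [condEntropy, hmarg_add]
  linarith

lemma condEntropy_le_add_binEntropy [Nonempty V] {j j' : R × V → ℝ} (hj : 0 ≤ j)
    (hj' : IsDist j') :
    condEntropy j' ≤ condEntropy j + (∑ p, (j' p - j p)⁺) * log (Fintype.card V)
      + binEntropy (∑ p, (j' p - j p)⁺) := by
  change _ ≤ _ + (∑ p, (j' - j)⁺ p) * _ + binEntropy (∑ p, (j' - j)⁺ p)
  have hm : 0 ≤ j ⊓ j' := le_inf hj hj'.1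
  have hj_eq : j = j ⊓ j' + (j - j')⁺ := by rw [inf_eq_sub_posPart_sub, sub_add_cancel]
  have hj'_eq : j' = j ⊓ j' + (j' - j)⁺ := by
    rw [inf_comm, inf_eq_sub_posPart_sub, sub_add_cancel]
  have hsum : ∑ p, (j ⊓ j') p + ∑ p, (j' - j)⁺ p = 1 := by
    rw [← sum_add_distrib, ← hj'.2]
    exact sum_congr rfl fun p _ => by rw [← Pi.add_apply, ← hj'_eq]
  have hlow := condEntropy_add_condEntropy_le hm (posPart_nonneg (j - j'))
  have hhigh := condEntropy_add_le hm (posPart_nonneg (j' - j)) hsum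
  rw [← hj_eq] at hlow
  rw [← hj'_eq] at hhigh
  linarith [condEntropy_nonneg (posPart_nonneg (j - j')),
    condEntropy_le (posPart_nonneg (j' - j))]

end CondEntropy

section MutualInfo

variable {R V : Type*} [Fintype R] [Fintype V]

lemma mutualInfo_eq_log_card_sub_condEntropy [Nonempty V] {j : R × V → ℝ} (hj : 0 ≤ j)
    (hV : ∀ v, ∑ r, j (r, v) = 1 / (Fintype.card V : ℝ)) :
    mutualInfo j = log (Fintype.card V) - condEntropy j := by
  have hn : (0 : ℝ) < Fintype.card V := by exact_mod_cast Fintype.card_pos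
  have hsum : ∑ p, j p = 1 := by
    rw [Fintype.sum_prod_type_right, sum_congr rfl fun v _ => hV v, sum_const, card_univ,
      nsmul_eq_mul]
    field_simp
  have hterm : ∀ p : R × V,
      (if j p = 0 then 0 else j p * log (j p / ((∑ v, j (p.1, v)) * ∑ r, j (r, p.2))))
        = j p * log (Fintype.card V) - negMulLog (j p) - j p * log (∑ v, j (p.1, v)) := by
    intro p
    split_ifs with hz
    · simp [hz]
    have hp : 0 < j p := (hj p).lt_of_ne' hz
    have hrow : 0 < ∑ v, j (p.1, v) :=
      hp.trans_le (single_le_sum (fun v _ => hj (p.1, v)) (mem_univ p.2))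
    rw [hV, log_div hz (by positivity), log_mul hrow.ne' (by positivity), one_div, log_inv,
      negMulLog]
    ring
  have hrow : ∑ p : R × V, j p * log (∑ v, j (p.1, v))
      = -∑ r, negMulLog (∑ v, j (r, v)) := by
    rw [Fintype.sum_prod_type, ← sum_neg_distrib]
    exact sum_congr rfl fun r _ => by dsimp only; rw [← sum_mul, negMulLog]; ring
  rw [mutualInfo, sum_congr rfl fun p _ => hterm p, sum_sub_distrib, sum_sub_distrib, ← sum_mul,
    hsum, hrow, condEntropy, entropy, entropy]
  ring

end MutualInfo

section Box

variable {R : Type*} [Fintype R]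

lemma exists_le_le_sum_eq {T hi : R → ℝ} {a : ℝ} (hT : T ≤ hi) (h₁ : ∑ r, T r ≤ a)
    (h₂ : a ≤ ∑ r, hi r) : ∃ q, T ≤ q ∧ q ≤ hi ∧ ∑ r, q r = a := by
  set c := (a - ∑ r, T r) / (∑ r, hi r - ∑ r, T r)
  have hc₀ : 0 ≤ c := div_nonneg (by linarith) (by linarith)
  have hc₁ : c ≤ 1 := div_le_one_of_le₀ (by linarith) (by linarith)
  have hc : c * (∑ r, hi r - ∑ r, T r) = a - ∑ r, T r :=
    div_mul_cancel_of_imp fun h => by linarith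
  refine ⟨T + c • (hi - T), fun r => ?_, fun r => ?_, ?_⟩
  · simpa using mul_nonneg hc₀ (sub_nonneg.2 (hT r))
  · simp only [Pi.add_apply, Pi.smul_apply, Pi.sub_apply, smul_eq_mul]
    nlinarith [hT r]
  · simp only [Pi.add_apply, Pi.smul_apply, Pi.sub_apply, smul_eq_mul, sum_add_distrib,
      ← mul_sum, sum_sub_distrib, hc]
    ring

lemma sum_abs_sub_of_le {T q : R → ℝ} (h : T ≤ q) :
    ∑ r, |T r - q r| = ∑ r, q r - ∑ r, T r := by
  rw [← sum_sub_distrib]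
  exact sum_congr rfl fun r _ => by rw [abs_sub_comm, abs_of_nonneg (sub_nonneg.2 (h r))]

lemma exists_mem_Icc_sum_eq {lo T hi : R → ℝ} {a : ℝ} (hlo : lo ≤ T) (hhi : T ≤ hi)
    (h₁ : ∑ r, lo r ≤ a) (h₂ : a ≤ ∑ r, hi r) :
    ∃ q, lo ≤ q ∧ q ≤ hi ∧ ∑ r, q r = a ∧ ∑ r, |T r - q r| = |∑ r, T r - a| := by
  rcases le_total (∑ r, T r) a with h | h
  · obtain ⟨q, hTq, hq, hsum⟩ := exists_le_le_sum_eq hhi h h₂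
    refine ⟨q, hlo.trans hTq, hq, hsum, ?_⟩
    rw [sum_abs_sub_of_le hTq, hsum, abs_sub_comm, abs_of_nonneg (sub_nonneg.2 h)]
  · obtain ⟨q, hTq, hq, hsum⟩ := exists_le_le_sum_eq (T := -T) (hi := -lo) (a := -a)
      (neg_le_neg hlo) (by simpa using h) (by simpa using h₁)
    have hqT := neg_le.1 hTq
    refine ⟨-q, le_neg_of_le_neg hq, hqT.trans hhi, by simp [hsum], ?_⟩
    simp_rw [abs_sub_comm (T _)]
    rw [sum_abs_sub_of_le hqT, abs_of_nonneg (sub_nonneg.2 h)]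
    simp [hsum]

lemma abs_sub_max_min_le {l h m : ℝ} (hlh : l ≤ h) :
    |m - max l (min m h)| ≤ (m - h)⁺ + (l - m)⁺ := by
  rcases le_total m h with h1 | h1 <;> rcases le_total l m with h2 | h2 <;>
    simp [abs_le, h1, h2, max_eq_right hlh] <;> linarith

end Box

section DifferentialPrivacy

variable {X R : Type*} [Fintype X] [Fintype R]

lemma IsDP.sum_posPart_sub_le {M : X → R → ℝ} {ε δ : ℝ} (h : IsDP M ε δ) (x x' : X) :
    ∑ r, (M x r - exp ε * M x' r)⁺ ≤ δ := by
  classical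
  set C := univ.filter fun r => 0 ≤ M x r - exp ε * M x' r
  calc ∑ r, (M x r - exp ε * M x' r)⁺ = ∑ r ∈ C, (M x r - exp ε * M x' r) := by
        rw [sum_filter]
        exact sum_congr rfl fun r _ => posPart_eq_ite
    _ ≤ δ := by
        rw [sum_sub_distrib, ← mul_sum]
        linarith [h x x' C]

lemma IsDP.sum_posPart_exp_neg_sub_le {M : X → R → ℝ} {ε δ : ℝ} (h : IsDP M ε δ) (x x' : X) :
    ∑ r, (exp (-ε) * M x' r - M x r)⁺ ≤ exp (-ε) * δ := by
  have hscale : ∀ r, (exp (-ε) * M x' r - M x r)⁺ = exp (-ε) * (M x' r - exp ε * M x r)⁺ := by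
    intro r
    rw [posPart_def, posPart_def, mul_max_of_nonneg _ _ (exp_pos _).le, mul_zero, mul_sub,
      ← mul_assoc, ← exp_add, neg_add_cancel, exp_zero, one_mul]
  rw [sum_congr rfl fun r _ => hscale r, ← mul_sum]
  exact mul_le_mul_of_nonneg_left (h.sum_posPart_sub_le x' x) (exp_pos _).le

lemma isDP_zero_of_le {M : X → R → ℝ} {ε : ℝ} (h : ∀ x x' r, M x r ≤ exp ε * M x' r) :
    IsDP M ε 0 := fun x x' C => by
  rw [add_zero, mul_sum]
  exact sum_le_sum fun r _ => h x x' r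

end DifferentialPrivacy

theorem IsDP.exists_isDP_two_mul_zero {X R : Type*} [Fintype X] [Fintype R] [Nonempty X]
    {M : X → R → ℝ} {ε δ : ℝ} (hM : ∀ x, IsDist (M x)) (hε : 0 ≤ ε) (h : IsDP M ε δ) :
    ∃ M' : X → R → ℝ, (∀ x, IsDist (M' x)) ∧ IsDP M' (2 * ε) 0 ∧
      ∀ x, ∑ r, |M x r - M' x r| ≤ 4 * δ := by
  obtain ⟨x₀⟩ := ‹Nonempty X›
  set lo : R → ℝ := fun r => exp (-ε) * M x₀ r
  set hi : R → ℝ := fun r => exp ε * M x₀ r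
  have hlo : 0 ≤ lo := fun r => mul_nonneg (exp_pos _).le ((hM x₀).1 r)
  have hlohi : lo ≤ hi := fun r =>
    mul_le_mul_of_nonneg_right (exp_le_exp.2 (by linarith)) ((hM x₀).1 r)
  set T : X → R → ℝ := fun x r => max (lo r) (min (M x r) (hi r))
  have hδ : 0 ≤ δ :=
    (sum_nonneg fun r _ => posPart_nonneg _).trans (h.sum_posPart_sub_le x₀ x₀)
  have hclamp : ∀ x, ∑ r, |M x r - T x r| ≤ 2 * δ := fun x =>
    calc ∑ r, |M x r - T x r| ≤ ∑ r, ((M x r - hi r)⁺ + (lo r - M x r)⁺) :=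
          sum_le_sum fun r _ => abs_sub_max_min_le (hlohi r)
      _ ≤ δ + exp (-ε) * δ := by
          rw [sum_add_distrib]
          exact add_le_add (h.sum_posPart_sub_le x x₀) (h.sum_posPart_exp_neg_sub_le x x₀)
      _ ≤ 2 * δ := by nlinarith [exp_le_one_iff.2 (neg_nonpos.2 hε)]
  have hmass : ∀ x, |∑ r, T x r - 1| ≤ 2 * δ := fun x => by
    rw [← (hM x).2, ← sum_sub_distrib]
    exact (abs_sum_le_sum_abs _ _).trans
      ((sum_congr rfl fun r _ => abs_sub_comm _ _).trans_le (hclamp x))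
  have hbox : ∀ x, ∃ q, lo ≤ q ∧ q ≤ hi ∧ ∑ r, q r = 1 ∧
      ∑ r, |T x r - q r| = |∑ r, T x r - 1| := fun x =>
    exists_mem_Icc_sum_eq (fun r => le_max_left _ _)
      (fun r => max_le (hlohi r) (min_le_right _ _))
      (by simp only [lo, ← mul_sum, (hM x₀).2, mul_one, exp_le_one_iff]; linarith)
      (by simp only [hi, ← mul_sum, (hM x₀).2, mul_one, one_le_exp_iff]; linarith)
  choose M' hloM' hM'hi hsumM' hdistM' using hbox
  refine ⟨M', fun x => ⟨hlo.trans (hloM' x), hsumM' x⟩, isDP_zero_of_le fun x x' r => ?_,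
    fun x => ?_⟩
  · calc M' x r ≤ hi r := hM'hi x r
      _ = exp (2 * ε) * lo r := by simp only [hi, lo, ← mul_assoc, ← exp_add]; ring_nf
      _ ≤ exp (2 * ε) * M' x' r := mul_le_mul_of_nonneg_left (hloM' x' r) (exp_pos _).le
  · calc ∑ r, |M x r - M' x r| ≤ ∑ r, (|M x r - T x r| + |T x r - M' x r|) :=
          sum_le_sum fun r _ => abs_sub_le _ _ _
      _ ≤ 4 * δ := by
          rw [sum_add_distrib, hdistM']
          linarith [hclamp x, hmass x]

lemma IsDist.nonempty {α : Type*} [Fintype α] {p : α → ℝ} (hp : IsDist p) : Nonempty α := by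
  by_contra h
  simpa [not_nonempty_iff.mp h] using hp.2

section JointLaw

variable {V X R : Type*} [Fintype V] [Fintype X] [Fintype R] {P : V → X → ℝ}

lemma jointMV_nonneg {M : X → R → ℝ} (hP : ∀ v, 0 ≤ P v) (hM : ∀ x, 0 ≤ M x) :
    0 ≤ jointMV P M := fun p =>
  mul_nonneg (by positivity) (sum_nonneg fun x _ => mul_nonneg (hP p.2 x) (hM x p.1))

lemma sum_jointMV_fst {M : X → R → ℝ} (hP : ∀ v, IsDist (P v)) (hM : ∀ x, IsDist (M x))
    (v : V) : ∑ r, jointMV P M (r, v) = 1 / (Fintype.card V : ℝ) := by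
  simp only [jointMV, ← mul_sum]
  rw [sum_comm]
  simp only [← mul_sum, (hM _).2, mul_one, (hP v).2]

lemma isDist_jointMV [Nonempty V] {M : X → R → ℝ} (hP : ∀ v, IsDist (P v))
    (hM : ∀ x, IsDist (M x)) : IsDist (jointMV P M) := by
  refine ⟨jointMV_nonneg (fun v => (hP v).1) (fun x => (hM x).1), ?_⟩
  rw [Fintype.sum_prod_type_right, sum_congr rfl fun v _ => sum_jointMV_fst hP hM v, sum_const,
    card_univ, nsmul_eq_mul]
  field_simp

lemma sum_abs_jointMV_sub_le [Nonempty V] {M M' : X → R → ℝ} (hP : ∀ v, IsDist (P v)) {D : ℝ}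
    (hD : ∀ x, ∑ r, |M x r - M' x r| ≤ D) :
    ∑ p, |jointMV P M p - jointMV P M' p| ≤ D := by
  have hn : (0 : ℝ) < Fintype.card V := by exact_mod_cast Fintype.card_pos
  calc ∑ p, |jointMV P M p - jointMV P M' p|
      ≤ ∑ p : R × V, 1 / (Fintype.card V : ℝ) * ∑ x, P p.2 x * |M x p.1 - M' x p.1| := by
        refine sum_le_sum fun p _ => ?_
        rw [jointMV, jointMV, ← mul_sub, abs_mul, abs_of_pos (by positivity), ← sum_sub_distrib]
        refine mul_le_mul_of_nonneg_left ((abs_sum_le_sum_abs _ _).trans_eq ?_) (by positivity)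
        exact sum_congr rfl fun x _ => by rw [← mul_sub, abs_mul, abs_of_nonneg ((hP _).1 x)]
    _ = 1 / (Fintype.card V : ℝ) * ∑ v, ∑ x, P v x * ∑ r, |M x r - M' x r| := by
        rw [← mul_sum, Fintype.sum_prod_type_right]
        refine congrArg _ (sum_congr rfl fun v _ => ?_)
        rw [sum_comm]
        simp only [mul_sum]
    _ ≤ 1 / (Fintype.card V : ℝ) * ∑ v : V, ∑ x, P v x * D := by
        gcongr with v _ x _
        · exact (hP v).1 x
        · exact hD x
    _ = D := by
        simp only [← sum_mul, (hP _).2, one_mul, sum_const, card_univ, nsmul_eq_mul]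
        field_simp

end JointLaw

lemma negMulLog_le_sub_add_mul_log {d δ : ℝ} (hd : 0 ≤ d) (hδ : 0 < δ) :
    negMulLog d ≤ δ - d + d * log (1 / δ) := by
  rcases hd.eq_or_lt with rfl | hd
  · simpa using hδ.le
  have key := log_le_sub_one_of_pos (show 0 < δ / d by positivity)
  rw [log_div hδ.ne' hd.ne'] at key
  have : d * (δ / d - 1) = δ - d := by field_simp
  rw [negMulLog, one_div, log_inv]
  nlinarith [mul_le_mul_of_nonneg_left key hd.le]

lemma binEntropy_le_add_mul_log {d δ : ℝ} (hd₀ : 0 ≤ d) (hd₁ : d ≤ 1) (hδ : 0 < δ) :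
    binEntropy d ≤ δ + d * log (1 / δ) := by
  rw [binEntropy_eq_negMulLog_add_negMulLog_one_sub]
  linarith [negMulLog_le_sub_add_mul_log hd₀ hδ, negMulLog_le_one_sub_self (sub_nonneg.2 hd₁)]

lemma mul_add_binEntropy_le {d δ L : ℝ} (hd₀ : 0 ≤ d) (hd₁ : d ≤ 1) (hdδ : d ≤ 4 * δ)
    (hδ₀ : 0 < δ) (hδ₁ : δ < 1) (hL : log 2 ≤ L) :
    d * L + binEntropy d ≤ 6 * (δ * L + δ * log (1 / δ)) := by
  have hlogδ : 0 < log (1 / δ) := log_pos (by rw [lt_div_iff₀ hδ₀]; linarith)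
  have hL' : 1 / 2 < L := by linarith [log_two_gt_d9]
  have h₁ := binEntropy_le_add_mul_log hd₀ hd₁ hδ₀
  have h₂ : d * log (1 / δ) ≤ 4 * δ * log (1 / δ) := by gcongr
  have h₃ : d * L ≤ 4 * δ * L := by gcongr
  nlinarith

/-- Transfer of the pure-DP mutual-information bound to approximate DP: there is an
absolute constant `C'` such that if every `(2ε,0)`-DP algorithm `M'` satisfies
`I(M'(P_V); V) ≤ C·ε²·‖{P_v}‖²_{∞→2}`, then every `(ε,δ)`-DP algorithm `M` satisfies
`I(M(P_V); V) ≤ C·ε²·‖{P_v}‖²_{∞→2} + C'·(δ·log|𝒱| + δ·log(1/δ))`. -/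
theorem stmt_9 :
    ∃ C' : ℝ, 0 < C' ∧
      ∀ (V X R : Type) [Fintype V] [Fintype X] [Fintype R] [Nonempty V]
        (P : V → X → ℝ), (∀ v, IsDist (P v)) →
      ∀ C ε δ : ℝ, 0 < C → 0 ≤ ε → 0 < δ → δ < 1 →
      (∀ M' : X → R → ℝ, (∀ x, IsDist (M' x)) → IsDP M' (2 * ε) 0 →
          mutualInfo (jointMV P M') ≤ C * ε ^ 2 * infTwoNormSq P) →
      ∀ M : X → R → ℝ, (∀ x, IsDist (M x)) → IsDP M ε δ →
        mutualInfo (jointMV P M) ≤ C * ε ^ 2 * infTwoNormSq P +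
          C' * (δ * Real.log (Fintype.card V) + δ * Real.log (1 / δ)) := by
  refine ⟨6, by norm_num, ?_⟩
  intro V X R _ _ _ _ P hP C ε δ hC hε hδ₀ hδ₁ hpure M hM hDP
  have : Nonempty X := (hP (Classical.arbitrary V)).nonempty
  obtain ⟨M', hM', hM'DP, hclose⟩ := hDP.exists_isDP_two_mul_zero hM hε
  have hj := isDist_jointMV hP hM
  have hj' := isDist_jointMV hP hM'
  have hpure' := hpure M' hM' hM'DP
  rw [mutualInfo_eq_log_card_sub_condEntropy hj'.1 (sum_jointMV_fst hP hM')] at hpure'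
  rw [mutualInfo_eq_log_card_sub_condEntropy hj.1 (sum_jointMV_fst hP hM)]
  have hnorm : 0 ≤ C * ε ^ 2 * infTwoNormSq P :=
    mul_nonneg (by positivity) (iSup_nonneg fun f => by positivity)
  have hlogδ : 0 < log (1 / δ) := log_pos (by rw [lt_div_iff₀ hδ₀]; linarith)
  rcases (Nat.one_le_iff_ne_zero.2 Fintype.card_ne_zero : 1 ≤ Fintype.card V).eq_or_lt
    with hV | hV
  · rw [← hV, Nat.cast_one, log_one]
    nlinarith [condEntropy_nonneg hj.1]
  set d := ∑ p, (jointMV P M' p - jointMV P M p)⁺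
  have hcont := condEntropy_le_add_binEntropy hj.1 hj'
  have hd₀ : 0 ≤ d := sum_nonneg fun p _ => posPart_nonneg _
  have hd₁ : d ≤ 1 := hj'.2 ▸ sum_le_sum fun p _ => max_le (sub_le_self _ (hj.1 p)) (hj'.1 p)
  have hdδ : d ≤ 4 * δ := (sum_abs_jointMV_sub_le hP hclose).trans' <| sum_le_sum fun p _ =>
    max_le ((le_abs_self _).trans_eq (abs_sub_comm _ _)) (abs_nonneg _)
  have hnum := mul_add_binEntropy_le hd₀ hd₁ hdδ hδ₀ hδ₁
    (log_le_log two_pos (by exact_mod_cast hV : (2 : ℝ) ≤ Fintype.card V))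
  linarith
end
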